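/- Let $\Omega \subset \mathbb{R}^d$ be a bounded Lipschitz domain partitioned into two disjoint open Lipschitz subdomains $\Omega_1, \Omega_2$ with interface $\Gamma = \overline{\Omega}_1 \cap \overline{\Omega}_2$. Let $0 < \nu \le \nu_2$ be constants, $f \in L^2(\Omega)$, $f_2 \in L^2(\Omega_2)$, and let $c(\mu, v) = \langle \mu, v \rangle$ be the duality pairing on $\Lambda = (H^1(\Omega_2))'$. If $(u, u_2, \lambda) \in H^1_0(\Omega) \times H^1(\Omega_2) \times \Lambda$ solves the fictitious domain problem: $(\nu \nabla u, \nabla v)_\Omega + c(\lambda, v|_{\Omega_2}) = (f, v)_\Omega$ for all $v \in H^1_0(\Omega)$, $((\nu_2 - \nu)\nabla u_2, \nabla v_2)_{\Omega_2} - c(\lambda, v_2) = (f_2 - f, v_2)_{\Omega_2}$ for all $v_2 \in H^1(\Omega_2)$, and $c(\mu, u|_{\Omega_2} - u_2) = 0$ for all $\mu \in \Lambda$, then $u$ solves the standard variational interface problem: $(\tilde{\nu} \nabla u, \nabla v)_\Omega = (\tilde{f}, v)_\Omega$ for all $v \in H^1_0(\Omega)$, where $\tilde{\nu} = \nu$ on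 $\Omega_1$, $\tilde{\nu} = \nu_2$ on $\Omega_2$, $\tilde{f} = f$ on $\Omega_1$, and $\tilde{f} = f_2$ on $\Omega_2$. -/
import Mathlib

/-- Equivalence of the fictitious domain formulation with distributed Lagrange
multiplier and the plain variational interface problem, in abstract form:
`H` plays the role of `H¹₀(Ω)`, `V₂` of `H¹(Ω₂)`, `R : H → V₂` is the restriction
operator, `g` and `g₂` are the gradient pairings `(∇·,∇·)` on `Ω` and `Ω₂`,
`f` and `f₂` the load functionals `(f,·)_Ω` and `(f₂ - f, ·)_{Ω₂}`, and the
multiplier space is the dual `Λ = V₂'` with the duality pairing as coupling.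
The plain form uses the decomposition `(ν̃∇u,∇v)_Ω = ν g(u,v) + (ν₂-ν) g₂(u|₂,v|₂)`
and `(f̃,v)_Ω = f(v) + f₂(v|₂)`. -/
theorem fictitious_domain_equiv_plain_variational
    {H V₂ : Type*} [NormedAddCommGroup H] [InnerProductSpace ℝ H] [CompleteSpace H]
    [NormedAddCommGroup V₂] [InnerProductSpace ℝ V₂] [CompleteSpace V₂]
    (R : H →L[ℝ] V₂)
    (g : H →L[ℝ] H →L[ℝ] ℝ) (g₂ : V₂ →L[ℝ] V₂ →L[ℝ] ℝ)
    (f : H →L[ℝ] ℝ) (f₂ : V₂ →L[ℝ] ℝ)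
    (ν ν₂ : ℝ) (hν : 0 < ν) (hνν₂ : ν ≤ ν₂)
    (u : H) (u₂ : V₂) (lam : V₂ →L[ℝ] ℝ)
    (h1 : ∀ v : H, ν * g u v + lam (R v) = f v)
    (h2 : ∀ v₂ : V₂, (ν₂ - ν) * g₂ u₂ v₂ - lam v₂ = f₂ v₂)
    (h3 : ∀ μ : V₂ →L[ℝ] ℝ, μ (R u - u₂) = 0) :
    ∀ v : H, ν * g u v + (ν₂ - ν) * g₂ (R u) (R v) = f v + f₂ (R v) := by
  have hRu : R u = u₂ := by
    have := h3 (innerSL ℝ (R u - u₂))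
    simp only [innerSL_apply_apply] at this
    have : R u - u₂ = 0 := by
      rwa [inner_self_eq_zero] at this
    exact sub_eq_zero.mp this
  intro v
  have := h1 v
  have := h2 (R v)
  rw [hRu]
  linarith
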